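/- Upper bound for the odd case: for any subset S̄ of Ω of size v − s ≥ 1 with distinguished element g*, the quantity F_{odd,3} defined as above satisfies F_{odd,3} ≤ 3·2^{2n}(2(v−s) − 1)², with equality if and only if S̄ is even. -/

import Mathlib

open Complex Finset

noncomputable def ipow (a : ZMod 4) : ℂ := Complex.I ^ a.val

def isOddZ4 (a : ZMod 4) : Prop := a = 1 ∨ a = 3

instance : DecidablePred isOddZ4 := fun a => by unfold isOddZ4; infer_instance

/-- `g` has an odd entry and its first (lowest-index) odd entry equals 1. -/
def inOmega {n : ℕ} (g : Fin n → ZMod 4) : Prop :=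
  ∃ i : Fin n, g i = 1 ∧ ∀ j : Fin n, j < i → ¬ isOddZ4 (g j)

instance {n : ℕ} : DecidablePred (inOmega (n := n)) := fun g => by
  unfold inOmega; infer_instance

def allEven {n : ℕ} (u : Fin n → ZMod 4) : Prop := ∀ i, u i = 0 ∨ u i = 2

instance {n : ℕ} : DecidablePred (allEven (n := n)) := fun u => by
  unfold allEven; infer_instance

def dot4 {n : ℕ} (u w : Fin n → ZMod 4) : ZMod 4 := ∑ i, u i * w i

/-- σ̄_{odd,u} of (A.14): the distinguished (partial) generator g* contributes
(i^{u·g*} + i^{3-u·g*})/(1-i), the remaining elements of S̄ contribute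
i^{u·g} + i^{-u·g}. -/
noncomputable def sigOdd {n : ℕ} (Sb : Finset (Fin n → ZMod 4))
    (gstar : Fin n → ZMod 4) (u : Fin n → ZMod 4) : ℂ :=
  (ipow (dot4 u gstar) + ipow (3 - dot4 u gstar)) / (1 - Complex.I)
    + ∑ g ∈ Sb.erase gstar, (ipow (dot4 u g) + ipow (-(dot4 u g)))

open scoped ComplexOrder

/-!
Write `sigOdd` as the Fourier transform `u ↦ ∑ₓ w(x) i^{u·x}` of the weight `w` that puts
`(1 ± i)/2` on `±g*` and `1` on `±g` for the other `g ∈ S̄`; then `w(-x) = conj (w x)` and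
`∑ₓ w(x) = 2(v-s) - 1 =: W`. Orthogonality of the characters gives
`∑_{u ∈ Δ₀} σ̄² = 2ⁿ ∑_c A_c²` and `∑_u σ̄³ = 4ⁿ ∑_{x,y} w(x) w(y) w(-x-y)`, where `A_c` is the
(real) total weight of the parity class `c ∈ (ℤ/2)ⁿ`.

Since `Ω` contains no pair `g, -g` and each of its elements has an odd entry, `w` lives on nonzero
parity classes and takes the value `1` off the class of `g*`. A nonzero term `w(x) w(y) w(-x-y)`
therefore involves three distinct classes, at most one of them that of `g*`, so its real part is
at most `Re w(x) Re w(y)`. Summing, the triple sum is at most `W² - ∑_c A_c²`, whence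
`F_{odd,3} ≤ 4ⁿ (2 ∑_c A_c² + W²) ≤ 3·4ⁿ W²`. Equality forces `∑_c A_c² = W²`, i.e. all weight
in one parity class, which says that `S̄` is even; conversely, for even `S̄` every triple term
vanishes.
-/

open ComplexConjugate

lemma sum_sq_sum_fiber {α β R : Type*} [Fintype α] [Fintype β] [DecidableEq β] [CommSemiring R]
    (f : α → β) (a : α → R) :
    ∑ c, (∑ x with f x = c, a x) ^ 2 = ∑ x, ∑ y, if f x = f y then a x * a y else 0 := by
  calc ∑ c, (∑ x with f x = c, a x) ^ 2
      = ∑ c, ∑ x with f x = c, a x * ∑ y with f y = f x, a y := by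
        refine sum_congr rfl fun c _ => ?_
        rw [sq, sum_mul]
        refine sum_congr rfl fun x hx => ?_
        rw [(mem_filter.mp hx).2]
    _ = ∑ x, ∑ y, if f x = f y then a x * a y else 0 := by
        rw [sum_fiberwise]
        refine sum_congr rfl fun x _ => ?_
        rw [mul_sum, sum_filter]
        exact sum_congr rfl fun y _ => by simp only [eq_comm]

lemma sum_ite_neg_mem {G M : Type*} [AddGroup G] [Fintype G] [DecidableEq G] [AddCommMonoid M]
    (s : Finset G) (f : G → M) : ∑ x, (if -x ∈ s then f x else 0) = ∑ g ∈ s, f (-g) := by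
  calc ∑ x, (if -x ∈ s then f x else 0) = ∑ y, if y ∈ s then f (-y) else 0 :=
        Fintype.sum_equiv (Equiv.neg G) _ _ fun x => by simp
    _ = ∑ g ∈ s, f (-g) := by rw [sum_ite_mem, univ_inter]

lemma sum_eq_ofReal_of_conj_neg {G : Type*} [InvolutiveNeg G] {w : G → ℂ}
    (hw : ∀ x, w (-x) = conj (w x)) {s : Finset G} (hs : ∀ x ∈ s, -x ∈ s) :
    ∑ x ∈ s, w x = ((∑ x ∈ s, (w x).re : ℝ) : ℂ) := by
  have hconj : conj (∑ x ∈ s, w x) = ∑ x ∈ s, w x := by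
    rw [map_sum]
    refine sum_nbij' (- ·) (- ·) hs hs (fun x _ => neg_neg x) (fun x _ => neg_neg x) fun x _ => ?_
    rw [hw]
  rw [← re_sum, conj_eq_iff_re.mp hconj]

lemma re_mul_mul_le_of_two_eq_one {a b c : ℂ}
    (h : a = 1 ∧ b = 1 ∨ a = 1 ∧ c = 1 ∨ b = 1 ∧ c = 1) (hc : c.re ≤ 1) :
    (a * b * c).re ≤ a.re * b.re := by
  rcases h with ⟨rfl, rfl⟩ | ⟨rfl, rfl⟩ | ⟨rfl, rfl⟩ <;> simp [hc]

lemma sum_sq_lt_sq_sum_of_pos {ι R : Type*} [CommRing R] [LinearOrder R] [IsStrictOrderedRing R]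
    {s : Finset ι} {f : ι → R} (hf : ∀ i ∈ s, 0 ≤ f i) {i j : ι} (hi : i ∈ s)
    (hj : j ∈ s) (hij : i ≠ j) (hfi : 0 < f i) (hfj : 0 < f j) :
    ∑ k ∈ s, f k ^ 2 < (∑ k ∈ s, f k) ^ 2 := by
  classical
  rw [sq (∑ k ∈ s, f k), sum_mul]
  refine sum_lt_sum (fun k hk => ?_) ⟨i, hi, ?_⟩
  · rw [sq]; exact mul_le_mul_of_nonneg_left (single_le_sum hf hk) (hf k hk)
  · have hpair : f i + f j ≤ ∑ k ∈ s, f k := by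
      rw [← sum_pair hij]
      exact sum_le_sum_of_subset_of_nonneg (by simp [insert_subset_iff, hi, hj])
        fun k hk _ => hf k hk
    rw [sq]
    exact mul_lt_mul_of_pos_left (by linarith) hfi

lemma ipow_add (a b : ZMod 4) : ipow (a + b) = ipow a * ipow b := by
  rw [ipow, ipow, ipow, ← pow_add, ZMod.val_add, ← Nat.mod_add_div (a.val + b.val) 4, pow_add,
    pow_mul, I_pow_four, one_pow, mul_one, Nat.mod_add_div]

@[simp] lemma ipow_zero : ipow 0 = 1 := by simp [ipow]
@[simp] lemma ipow_one : ipow 1 = I := by simp [ipow, show (1 : ZMod 4).val = 1 from rfl]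
@[simp] lemma ipow_two : ipow 2 = -1 := by simp [ipow, show (2 : ZMod 4).val = 2 from rfl]
@[simp] lemma ipow_three : ipow 3 = -I := by
  simp [ipow, show (3 : ZMod 4).val = 3 from rfl, pow_succ]

lemma ipow_sum {ι : Type*} (s : Finset ι) (f : ι → ZMod 4) :
    ipow (∑ i ∈ s, f i) = ∏ i ∈ s, ipow (f i) := by
  classical
  induction s using Finset.induction_on with
  | empty => simp
  | insert a s ha ih => rw [sum_insert ha, prod_insert ha, ipow_add, ih]

lemma ipow_add_ipow_three_sub_div (d : ZMod 4) :
    (ipow d + ipow (3 - d)) / (1 - I) = (1 + I) / 2 * ipow d + (1 - I) / 2 * ipow (-d) := by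
  have h : (1 : ℂ) - I ≠ 0 := by
    intro h; simpa using congrArg Complex.im h
  rw [sub_eq_add_neg (3 : ZMod 4), ipow_add, ipow_three, div_eq_iff h]
  linear_combination (ipow d - ipow (-d)) / 2 * I_sq

lemma ZMod.sum_univ_four {M : Type*} [AddCommMonoid M] (f : ZMod 4 → M) :
    ∑ a, f a = f 0 + f 1 + f 2 + f 3 :=
  Fin.sum_univ_four f

lemma zmod_four_cases : ∀ c : ZMod 4, c = 0 ∨ c = 1 ∨ c = 2 ∨ c = 3 := by decide

lemma zmod_four_table : (2 : ZMod 4) * 2 = 0 ∧ (2 : ZMod 4) * 3 = 2 ∧ (3 : ZMod 4) * 2 = 2 ∧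
    (3 : ZMod 4) * 3 = 1 ∧ (1 : ZMod 4) ≠ 0 ∧ (2 : ZMod 4) ≠ 0 ∧ (3 : ZMod 4) ≠ 0 ∧
    (1 : ZMod 4) ≠ 2 ∧ (3 : ZMod 4) ≠ 2 ∧ (0 : ZMod 4) ≠ 2 := by
  decide

lemma sum_ipow_mul (c : ZMod 4) : ∑ a : ZMod 4, ipow (a * c) = if c = 0 then 4 else 0 := by
  rcases zmod_four_cases c with rfl | rfl | rfl | rfl <;> simp [ZMod.sum_univ_four, zmod_four_table]

lemma sum_even_ipow_mul (c : ZMod 4) :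
    ∑ a ∈ ({0, 2} : Finset (ZMod 4)), ipow (a * c) = if c = 0 ∨ c = 2 then 2 else 0 := by
  rcases zmod_four_cases c with rfl | rfl | rfl | rfl <;> simp [zmod_four_table, one_add_one_eq_two]

section Z4n

variable {n : ℕ}

lemma dot4_add_right (u x y : Fin n → ZMod 4) : dot4 u (x + y) = dot4 u x + dot4 u y :=
  dotProduct_add u x y

lemma dot4_neg_right (u x : Fin n → ZMod 4) : dot4 u (-x) = -dot4 u x :=
  dotProduct_neg u x

lemma sum_piFinset_ipow_dot4 (t : Finset (ZMod 4)) (x : Fin n → ZMod 4) :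
    ∑ u ∈ Fintype.piFinset fun _ => t, ipow (dot4 u x) =
      ∏ i, ∑ a ∈ t, ipow (a * x i) := by
  rw [prod_univ_sum]
  exact sum_congr rfl fun u _ => ipow_sum _ _

lemma sum_ipow_dot4 (x : Fin n → ZMod 4) :
    ∑ u, ipow (dot4 u x) = if x = 0 then 4 ^ n else 0 := by
  rw [← Fintype.piFinset_univ, sum_piFinset_ipow_dot4]
  simp only [sum_ipow_mul, prod_ite_zero, prod_const, card_univ, Fintype.card_fin, funext_iff,
    Pi.zero_apply, mem_univ, true_implies]

lemma sum_allEven_ipow_dot4 (x : Fin n → ZMod 4) :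
    ∑ u with allEven u, ipow (dot4 u x) = if allEven x then 2 ^ n else 0 := by
  have hE : univ.filter allEven =
      Fintype.piFinset fun (_ : Fin n) => ({0, 2} : Finset (ZMod 4)) := by
    ext u; simp [allEven]
  rw [hE, sum_piFinset_ipow_dot4]
  simp only [sum_even_ipow_mul, prod_ite_zero, prod_const, card_univ, Fintype.card_fin, allEven,
    mem_univ, true_implies]

def parity : (Fin n → ZMod 4) →+ (Fin n → ZMod 2) :=
  (ZMod.castHom (show 2 ∣ 4 by norm_num) (ZMod 2)).toAddMonoidHom.compLeft (Fin n)

lemma parity_apply (x : Fin n → ZMod 4) (i : Fin n) : parity x i = (x i).cast := rfl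

lemma allEven_add_iff (x y : Fin n → ZMod 4) : allEven (x + y) ↔ parity x = parity y := by
  have h : ∀ a b : ZMod 4, (a + b = 0 ∨ a + b = 2) ↔ (a.cast : ZMod 2) = b.cast := by decide
  simp only [allEven, funext_iff, parity_apply, Pi.add_apply, h]

lemma parity_neg (x : Fin n → ZMod 4) : parity (-x) = parity x := by
  rw [map_neg]; funext i; exact ZMod.neg_eq_self_mod_two _

lemma parity_neg_add (x y : Fin n → ZMod 4) : parity (-(x + y)) = parity x + parity y := by
  rw [parity_neg, map_add]

lemma inOmega.parity_ne_zero {g : Fin n → ZMod 4} (h : inOmega g) : parity g ≠ 0 := by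
  obtain ⟨i, hi, -⟩ := h
  intro h0
  have := congrFun h0 i
  rw [parity_apply, hi, Pi.zero_apply] at this
  exact absurd this (by decide)

lemma inOmega.ne_neg {g g' : Fin n → ZMod 4} (h : inOmega g) (h' : inOmega g') : g ≠ -g' := by
  rintro rfl
  obtain ⟨i, hi, hfirst⟩ := h
  obtain ⟨j, hj, hfirst'⟩ := h'
  simp only [Pi.neg_apply] at hi hfirst
  rcases lt_trichotomy i j with hij | rfl | hij
  · exact hfirst' i hij ((by decide : ∀ a : ZMod 4, -a = 1 → isOddZ4 a) _ hi)
  · rw [hj] at hi; exact absurd hi (by decide)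
  · exact hfirst j hij (by rw [hj]; decide)

noncomputable def fourierZ4 (v : (Fin n → ZMod 4) → ℂ) (u : Fin n → ZMod 4) : ℂ :=
  ∑ x, v x * ipow (dot4 u x)

lemma fourierZ4_sq (v : (Fin n → ZMod 4) → ℂ) (u : Fin n → ZMod 4) :
    fourierZ4 v u ^ 2 = ∑ x, ∑ y, v x * v y * ipow (dot4 u (x + y)) := by
  rw [fourierZ4, sq, sum_mul_sum]
  refine sum_congr rfl fun x _ => sum_congr rfl fun y _ => ?_
  rw [dot4_add_right, ipow_add]; ring

lemma fourierZ4_cube (v : (Fin n → ZMod 4) → ℂ) (u : Fin n → ZMod 4) :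
    fourierZ4 v u ^ 3 = ∑ x, ∑ y, ∑ z, v x * v y * v z * ipow (dot4 u (x + y + z)) := by
  rw [pow_succ, fourierZ4_sq, fourierZ4, sum_mul]
  refine sum_congr rfl fun x _ => ?_
  rw [sum_mul]
  refine sum_congr rfl fun y _ => ?_
  rw [mul_sum]
  refine sum_congr rfl fun z _ => ?_
  rw [dot4_add_right u (x + y), ipow_add]; ring

lemma sum_allEven_fourierZ4_sq (v : (Fin n → ZMod 4) → ℂ) :
    ∑ u with allEven u, fourierZ4 v u ^ 2 =
      2 ^ n * ∑ c, (∑ x with parity x = c, v x) ^ 2 := by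
  calc ∑ u with allEven u, fourierZ4 v u ^ 2
      = ∑ x, ∑ y, v x * v y * ∑ u with allEven u, ipow (dot4 u (x + y)) := by
        simp only [fourierZ4_sq, mul_sum]
        rw [sum_comm]
        exact sum_congr rfl fun x _ => sum_comm
    _ = 2 ^ n * ∑ c, (∑ x with parity x = c, v x) ^ 2 := by
        simp only [sum_allEven_ipow_dot4, allEven_add_iff, sum_sq_sum_fiber, mul_sum]
        exact sum_congr rfl fun x _ => sum_congr rfl fun y _ => by split_ifs <;> ring

lemma sum_fourierZ4_cube (v : (Fin n → ZMod 4) → ℂ) :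
    ∑ u, fourierZ4 v u ^ 3 = 4 ^ n * ∑ x, ∑ y, v x * v y * v (-(x + y)) := by
  calc ∑ u, fourierZ4 v u ^ 3
      = ∑ x, ∑ y, ∑ z, v x * v y * v z * ∑ u, ipow (dot4 u (x + y + z)) := by
        simp only [fourierZ4_cube, mul_sum]
        rw [sum_comm]
        refine sum_congr rfl fun x _ => ?_
        rw [sum_comm]
        exact sum_congr rfl fun y _ => sum_comm
    _ = 4 ^ n * ∑ x, ∑ y, v x * v y * v (-(x + y)) := by
        simp only [sum_ipow_dot4, add_eq_zero_iff_eq_neg', mul_ite, mul_zero, sum_ite_eq', mem_univ,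
          if_true, mul_sum]
        exact sum_congr rfl fun x _ => sum_congr rfl fun y _ => mul_comm _ _

end Z4n

section OddWeight

variable {n : ℕ} (Sb : Finset (Fin n → ZMod 4)) (gstar : Fin n → ZMod 4)

noncomputable def oddWeight (x : Fin n → ZMod 4) : ℂ :=
  (if x = gstar then (1 + I) / 2 else 0) + (if x = -gstar then (1 - I) / 2 else 0)
    + (if x ∈ Sb.erase gstar then 1 else 0) + (if -x ∈ Sb.erase gstar then 1 else 0)

lemma sigOdd_eq_fourierZ4 : sigOdd Sb gstar = fourierZ4 (oddWeight Sb gstar) := by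
  funext u
  have hneg : ∑ x, (if -x ∈ Sb.erase gstar then ipow (dot4 u x) else 0) =
      ∑ g ∈ Sb.erase gstar, ipow (-dot4 u g) := by
    rw [sum_ite_neg_mem]; simp only [dot4_neg_right]
  simp only [sigOdd, fourierZ4, oddWeight, add_mul, ite_mul, zero_mul, one_mul, sum_add_distrib,
    sum_ite_eq', mem_univ, if_true, sum_ite_mem, univ_inter, hneg, ipow_add_ipow_three_sub_div,
    dot4_neg_right]
  exact (add_assoc _ _ _).symm

lemma oddWeight_neg (x : Fin n → ZMod 4) :
    oddWeight Sb gstar (-x) = conj (oddWeight Sb gstar x) := by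
  simp only [oddWeight, map_add, apply_ite conj, map_div₀, map_sub, map_one, map_zero, conj_I,
    map_ofNat, neg_neg, neg_eq_iff_eq_neg, sub_neg_eq_add]
  ring_nf

lemma re_oddWeight_nonneg (x : Fin n → ZMod 4) : 0 ≤ (oddWeight Sb gstar x).re := by
  simp only [oddWeight, add_re]
  split_ifs <;> norm_num

lemma sum_oddWeight (hg : gstar ∈ Sb) : ∑ x, oddWeight Sb gstar x = 2 * Sb.card - 1 := by
  have hneg : ∑ x, (if -x ∈ Sb.erase gstar then (1 : ℂ) else 0) = (Sb.erase gstar).card := by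
    rw [sum_ite_neg_mem, sum_const, nsmul_one]
  simp only [oddWeight, sum_add_distrib, sum_ite_eq', mem_univ, if_true, sum_ite_mem, univ_inter,
    hneg, sum_const, nsmul_eq_mul, mul_one, cast_card_erase_of_mem hg]
  ring

variable {Sb gstar}

lemma exists_parity_eq_of_oddWeight_ne_zero {x : Fin n → ZMod 4} (hx : oddWeight Sb gstar x ≠ 0)
    (hg : gstar ∈ Sb) : ∃ g ∈ Sb, parity x = parity g := by
  by_cases h1 : x = gstar
  · exact ⟨gstar, hg, by rw [h1]⟩
  by_cases h2 : x = -gstar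
  · exact ⟨gstar, hg, by rw [h2, parity_neg]⟩
  by_cases h3 : x ∈ Sb.erase gstar
  · exact ⟨x, mem_of_mem_erase h3, rfl⟩
  by_cases h4 : -x ∈ Sb.erase gstar
  · exact ⟨-x, mem_of_mem_erase h4, (parity_neg x).symm⟩
  simp [oddWeight, h1, h2, h3, h4] at hx

lemma parity_ne_zero_of_oddWeight_ne_zero (hΩ : ∀ g ∈ Sb, inOmega g) (hg : gstar ∈ Sb)
    {x : Fin n → ZMod 4} (hx : oddWeight Sb gstar x ≠ 0) : parity x ≠ 0 := by
  obtain ⟨g, hgS, hxg⟩ := exists_parity_eq_of_oddWeight_ne_zero hx hg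
  exact hxg ▸ (hΩ g hgS).parity_ne_zero

lemma oddWeight_cases (hΩ : ∀ g ∈ Sb, inOmega g) (hg : gstar ∈ Sb) (x : Fin n → ZMod 4) :
    oddWeight Sb gstar x = 0 ∨ oddWeight Sb gstar x = 1 ∨
      x = gstar ∧ oddWeight Sb gstar x = (1 + I) / 2 ∨
      x = -gstar ∧ oddWeight Sb gstar x = (1 - I) / 2 := by
  have hneg : ∀ g ∈ Sb, -g ∉ Sb := fun g hgS hng => (hΩ _ hng).ne_neg (hΩ g hgS) rfl
  have hstar : gstar ≠ -gstar := (hΩ _ hg).ne_neg (hΩ _ hg)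
  by_cases h1 : x = gstar
  · subst h1
    simp [oddWeight, hstar, hneg _ hg]
  by_cases h2 : x = -gstar
  · subst h2
    simp [oddWeight, Ne.symm hstar, hneg _ hg]
  by_cases h3 : x ∈ Sb.erase gstar
  · simp [oddWeight, h1, h2, h3, hneg _ (mem_of_mem_erase h3)]
  · simp [oddWeight, h1, h2, h3]
    tauto

lemma re_oddWeight_le_one (hΩ : ∀ g ∈ Sb, inOmega g) (hg : gstar ∈ Sb)
    (x : Fin n → ZMod 4) :
    (oddWeight Sb gstar x).re ≤ 1 := by
  rcases oddWeight_cases hΩ hg x with h | h | ⟨-, h⟩ | ⟨-, h⟩ <;> norm_num [h, div_re]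

lemma parity_eq_of_oddWeight_ne (hΩ : ∀ g ∈ Sb, inOmega g) (hg : gstar ∈ Sb)
    {x : Fin n → ZMod 4} (h0 : oddWeight Sb gstar x ≠ 0) (h1 : oddWeight Sb gstar x ≠ 1) :
    parity x = parity gstar := by
  rcases oddWeight_cases hΩ hg x with h | h | ⟨rfl, -⟩ | ⟨rfl, -⟩
  exacts [absurd h h0, absurd h h1, rfl, parity_neg gstar]

lemma re_oddWeight_pos_of_mem {g : Fin n → ZMod 4} (hgS : g ∈ Sb) :
    0 < (oddWeight Sb gstar g).re := by
  by_cases h : g = gstar <;> simp [oddWeight, h, hgS] <;> split_ifs <;> norm_num [div_re]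

end OddWeight

section OddMoments

variable {n : ℕ} (Sb : Finset (Fin n → ZMod 4)) (gstar : Fin n → ZMod 4)

noncomputable def oddMass (c : Fin n → ZMod 2) : ℝ :=
  ∑ x with parity x = c, (oddWeight Sb gstar x).re

noncomputable def oddTripleRe : ℝ :=
  ∑ x, ∑ y, (oddWeight Sb gstar x * oddWeight Sb gstar y * oddWeight Sb gstar (-(x + y))).re

lemma oddMass_nonneg (c : Fin n → ZMod 2) : 0 ≤ oddMass Sb gstar c :=
  sum_nonneg fun x _ => re_oddWeight_nonneg Sb gstar x

lemma sum_re_oddWeight (hg : gstar ∈ Sb) :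
    ∑ x, (oddWeight Sb gstar x).re = 2 * Sb.card - 1 := by
  rw [← re_sum, sum_oddWeight Sb gstar hg]; simp

lemma sum_oddMass (hg : gstar ∈ Sb) : ∑ c, oddMass Sb gstar c = 2 * Sb.card - 1 := by
  rw [← sum_re_oddWeight Sb gstar hg]
  exact sum_fiberwise univ parity _

lemma sum_parity_oddWeight (c : Fin n → ZMod 2) :
    ∑ x with parity x = c, oddWeight Sb gstar x = oddMass Sb gstar c :=
  sum_eq_ofReal_of_conj_neg (oddWeight_neg Sb gstar) fun x hx => by
    simpa [parity_neg] using hx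

lemma sum_allEven_sigOdd_sq :
    ∑ u ∈ univ.filter allEven, sigOdd Sb gstar u ^ 2 =
      2 ^ n * ((∑ c, oddMass Sb gstar c ^ 2 : ℝ) : ℂ) := by
  rw [sigOdd_eq_fourierZ4, sum_allEven_fourierZ4_sq]
  push_cast
  simp only [sum_parity_oddWeight]

lemma sum_sigOdd_cube :
    ∑ u, sigOdd Sb gstar u ^ 3 = 4 ^ n * (oddTripleRe Sb gstar : ℂ) := by
  rw [sigOdd_eq_fourierZ4, sum_fourierZ4_cube]
  set F : (Fin n → ZMod 4) × (Fin n → ZMod 4) → ℂ := fun p =>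
    oddWeight Sb gstar p.1 * oddWeight Sb gstar p.2 * oddWeight Sb gstar (-(p.1 + p.2)) with hF
  have hconj : ∀ p, F (-p) = conj (F p) := fun p => by
    simp only [hF, Prod.fst_neg, Prod.snd_neg, ← neg_add, map_mul, ← oddWeight_neg]
  have hreal := sum_eq_ofReal_of_conj_neg hconj (s := univ) fun p _ => mem_univ _
  rw [oddTripleRe, ← Fintype.sum_prod_type' (fun x y => (F (x, y)).re), ← hreal]
  exact congrArg _ (Fintype.sum_prod_type' fun x y => F (x, y)).symm

variable {Sb gstar}

lemma re_oddWeight_triple_le (hΩ : ∀ g ∈ Sb, inOmega g) (hg : gstar ∈ Sb)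
    (x y : Fin n → ZMod 4) :
    (oddWeight Sb gstar x * oddWeight Sb gstar y * oddWeight Sb gstar (-(x + y))).re ≤
      if parity x = parity y then 0 else (oddWeight Sb gstar x).re * (oddWeight Sb gstar y).re := by
  set w := oddWeight Sb gstar
  set z := -(x + y)
  have hrhs : 0 ≤ if parity x = parity y then 0 else (w x).re * (w y).re := by
    split_ifs
    exacts [le_rfl, mul_nonneg (re_oddWeight_nonneg Sb gstar x) (re_oddWeight_nonneg Sb gstar y)]
  by_cases h0 : w x = 0 ∨ w y = 0 ∨ w z = 0
  · rcases h0 with h | h | h <;> exact le_of_eq_of_le (by simp [h]) hrhs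
  simp only [not_or] at h0
  obtain ⟨hx, hy, hz⟩ := h0
  have hpx := parity_ne_zero_of_oddWeight_ne_zero hΩ hg hx
  have hpy := parity_ne_zero_of_oddWeight_ne_zero hΩ hg hy
  have hpz : parity z = parity x + parity y := parity_neg_add x y
  have hxy : parity x ≠ parity y := by
    intro h
    apply parity_ne_zero_of_oddWeight_ne_zero hΩ hg hz
    rw [hpz, h]; funext i; exact CharTwo.add_self_eq_zero _
  -- Only weights in the parity class of `gstar` differ from `0` and `1`, and the classes of
  -- `x`, `y`, `z` are pairwise distinct.
  have one_of :
      ∀ a b, w a ≠ 0 → w b ≠ 0 → parity a ≠ parity b → w a = 1 ∨ w b = 1 := by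
    intro a b ha hb hab
    by_contra! h
    exact hab ((parity_eq_of_oddWeight_ne hΩ hg ha h.1).trans
      (parity_eq_of_oddWeight_ne hΩ hg hb h.2).symm)
  have hxz := one_of x z hx hz (by rw [hpz]; intro h; exact hpy (by simpa using h))
  have hyz := one_of y z hy hz (by rw [hpz]; intro h; exact hpx (by simpa using h))
  rw [if_neg hxy]
  exact re_mul_mul_le_of_two_eq_one (by have := one_of x y hx hy hxy; tauto)
    (re_oddWeight_le_one hΩ hg z)

lemma oddTripleRe_le (hΩ : ∀ g ∈ Sb, inOmega g) (hg : gstar ∈ Sb) :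
    oddTripleRe Sb gstar ≤ (2 * Sb.card - 1) ^ 2 - ∑ c, oddMass Sb gstar c ^ 2 := by
  set a := fun x => (oddWeight Sb gstar x).re
  calc oddTripleRe Sb gstar ≤ ∑ x, ∑ y, if parity x = parity y then 0 else a x * a y :=
        sum_le_sum fun x _ => sum_le_sum fun y _ => re_oddWeight_triple_le hΩ hg x y
    _ = (∑ x, a x) * (∑ y, a y) -
          ∑ x, ∑ y, if parity x = parity y then a x * a y else 0 := by
        rw [sum_mul_sum, ← sum_sub_distrib]
        refine sum_congr rfl fun x _ => ?_
        rw [← sum_sub_distrib]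
        exact sum_congr rfl fun y _ => by split_ifs <;> ring
    _ = (2 * Sb.card - 1) ^ 2 - ∑ c, oddMass Sb gstar c ^ 2 := by
        rw [← sum_sq_sum_fiber, sum_re_oddWeight Sb gstar hg, sq]
        rfl

lemma sum_oddMass_sq_le (hg : gstar ∈ Sb) :
    ∑ c, oddMass Sb gstar c ^ 2 ≤ (2 * Sb.card - 1) ^ 2 :=
  sum_oddMass Sb gstar hg ▸ sum_sq_le_sq_sum_of_nonneg fun c _ => oddMass_nonneg Sb gstar c

lemma sum_oddMass_sq_lt (hg : gstar ∈ Sb) {g g' : Fin n → ZMod 4} (hgS : g ∈ Sb)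
    (hg'S : g' ∈ Sb) (hgg' : parity g ≠ parity g') :
    ∑ c, oddMass Sb gstar c ^ 2 < (2 * Sb.card - 1) ^ 2 := by
  have hpos : ∀ {g}, g ∈ Sb → 0 < oddMass Sb gstar (parity g) := fun {g} hgS =>
    (re_oddWeight_pos_of_mem hgS).trans_le <|
      single_le_sum (fun x _ => re_oddWeight_nonneg Sb gstar x) (by simp)
  rw [← sum_oddMass Sb gstar hg]
  exact sum_sq_lt_sq_sum_of_pos (fun c _ => oddMass_nonneg Sb gstar c) (mem_univ _) (mem_univ _)
    hgg' (hpos hgS) (hpos hg'S)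

section Even

variable (hΩ : ∀ g ∈ Sb, inOmega g) (hg : gstar ∈ Sb)
  (heven : ∀ g ∈ Sb, ∀ g' ∈ Sb, allEven (g + g'))

include hg heven

lemma parity_eq_of_oddWeight_ne_zero_of_even {x : Fin n → ZMod 4}
    (hx : oddWeight Sb gstar x ≠ 0) : parity x = parity gstar := by
  obtain ⟨g, hgS, hxg⟩ := exists_parity_eq_of_oddWeight_ne_zero hx hg
  exact hxg.trans ((allEven_add_iff g gstar).mp (heven g hgS gstar hg))

lemma sum_oddMass_sq_of_even : ∑ c, oddMass Sb gstar c ^ 2 = (2 * Sb.card - 1) ^ 2 := by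
  have hzero : ∀ c ≠ parity gstar, oddMass Sb gstar c = 0 := fun c hc =>
    sum_eq_zero fun x hx => by
      by_cases hx0 : oddWeight Sb gstar x = 0
      · simp [hx0]
      · have hpx := parity_eq_of_oddWeight_ne_zero_of_even hg heven hx0
        exact (hc ((mem_filter.mp hx).2 ▸ hpx)).elim
  rw [← sum_oddMass Sb gstar hg, sum_eq_single (parity gstar) (fun c _ hc => by simp [hzero c hc])
    (by simp), sum_eq_single (parity gstar) (fun c _ hc => hzero c hc) (by simp)]

include hΩ in
lemma oddTripleRe_eq_zero_of_even : oddTripleRe Sb gstar = 0 := by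
  refine sum_eq_zero fun x _ => sum_eq_zero fun y _ => ?_
  by_cases hx : oddWeight Sb gstar x = 0
  · simp [hx]
  by_cases hy : oddWeight Sb gstar y = 0
  · simp [hy]
  suffices oddWeight Sb gstar (-(x + y)) = 0 by rw [this, mul_zero, zero_re]
  by_contra hz
  apply parity_ne_zero_of_oddWeight_ne_zero hΩ hg hz
  rw [parity_neg_add, parity_eq_of_oddWeight_ne_zero_of_even hg heven hx,
    parity_eq_of_oddWeight_ne_zero_of_even hg heven hy]
  funext i; exact CharTwo.add_self_eq_zero _

end Even

end OddMoments

lemma oddF3_eq_ofReal {n : ℕ} (Sb : Finset (Fin n → ZMod 4)) (gstar : Fin n → ZMod 4) :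
    3 * 2 ^ n * (∑ u ∈ univ.filter allEven, sigOdd Sb gstar u ^ 2) +
        ∑ u, sigOdd Sb gstar u ^ 3 =
      ((4 ^ n * (3 * ∑ c, oddMass Sb gstar c ^ 2 + oddTripleRe Sb gstar) : ℝ) : ℂ) := by
  rw [sum_allEven_sigOdd_sq, sum_sigOdd_cube]
  push_cast
  rw [show (4 : ℂ) ^ n = 2 ^ n * 2 ^ n by rw [← mul_pow]; norm_num]
  ring

theorem theorem_three_general {n : ℕ} (Sb : Finset (Fin n → ZMod 4))
    (hΩ : ∀ g ∈ Sb, inOmega g)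
    (gstar : Fin n → ZMod 4) (hg : gstar ∈ Sb) :
    (3 * 2 ^ n *
        (∑ u ∈ Finset.univ.filter (allEven (n := n)), (sigOdd Sb gstar u) ^ 2) +
      (∑ u : Fin n → ZMod 4, (sigOdd Sb gstar u) ^ 3)
        ≤ 3 * 2 ^ (2 * n) * (2 * (Sb.card : ℂ) - 1) ^ 2) ∧
    ((3 * 2 ^ n *
        (∑ u ∈ Finset.univ.filter (allEven (n := n)), (sigOdd Sb gstar u) ^ 2) +
      (∑ u : Fin n → ZMod 4, (sigOdd Sb gstar u) ^ 3)
        = 3 * 2 ^ (2 * n) * (2 * (Sb.card : ℂ) - 1) ^ 2)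
      ↔ ∀ g ∈ Sb, ∀ g' ∈ Sb, allEven (g + g')) := by
  have hRHS : 3 * 2 ^ (2 * n) * (2 * (Sb.card : ℂ) - 1) ^ 2 =
      ((4 ^ n * (3 * (2 * Sb.card - 1) ^ 2) : ℝ) : ℂ) := by
    push_cast
    rw [pow_mul]
    ring
  have hR := oddTripleRe_le hΩ hg
  have hQ := sum_oddMass_sq_le hg
  have h4 : (0 : ℝ) < 4 ^ n := by positivity
  rw [oddF3_eq_ofReal, hRHS, real_le_real, ofReal_inj]
  refine ⟨by gcongr; linarith, fun heq => ?_, fun heven => ?_⟩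
  · by_contra hodd
    simp only [not_forall, allEven_add_iff] at hodd
    obtain ⟨g, hgS, g', hg'S, hgg'⟩ := hodd
    have := sum_oddMass_sq_lt hg hgS hg'S hgg'
    nlinarith
  · rw [oddTripleRe_eq_zero_of_even hΩ hg heven, sum_oddMass_sq_of_even hg heven]
    ring

/-- Theorem 3: F_{odd,3} ≤ 3·2^{2n}(2(v-s)-1)² for any S̄ ⊆ Ω with distinguished
element g*, with equality if and only if S̄ is even. -/
theorem theorem_three {n : ℕ} (Sb : Finset (Fin n → ZMod 4))
    (hΩ : ∀ g ∈ Sb, inOmega g)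
    (gstar : Fin n → ZMod 4) (hg : gstar ∈ Sb) (hcard : 1 ≤ Sb.card) :
    (3 * 2 ^ n *
        (∑ u ∈ Finset.univ.filter (allEven (n := n)), (sigOdd Sb gstar u) ^ 2) +
      (∑ u : Fin n → ZMod 4, (sigOdd Sb gstar u) ^ 3)
        ≤ 3 * 2 ^ (2 * n) * (2 * (Sb.card : ℂ) - 1) ^ 2) ∧
    ((3 * 2 ^ n *
        (∑ u ∈ Finset.univ.filter (allEven (n := n)), (sigOdd Sb gstar u) ^ 2) +
      (∑ u : Fin n → ZMod 4, (sigOdd Sb gstar u) ^ 3)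
        = 3 * 2 ^ (2 * n) * (2 * (Sb.card : ℂ) - 1) ^ 2)
      ↔ ∀ g ∈ Sb, ∀ g' ∈ Sb, allEven (g + g')) :=
  theorem_three_general Sb hΩ gstar hg
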